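/- For every t > 0, one has artanh((tanh t)^{1/4}) > t^{1/4}. -/

import Mathlib

open Real Filter Set

noncomputable def artanh (y : ℝ) : ℝ := Real.log ((1 + y) / (1 - y)) / 2

lemma my_continuous_tanh : Continuous Real.tanh := by
  have : Real.tanh = fun x => Real.sinh x / Real.cosh x :=
    funext fun x => Real.tanh_eq_sinh_div_cosh x
  rw [this]
  exact Real.continuous_sinh.div Real.continuous_cosh fun x => (Real.cosh_pos x).ne'

lemma my_hasDerivAt_tanh (x : ℝ) : HasDerivAt Real.tanh (1 - Real.tanh x ^ 2) x := by
  have h := (Real.hasDerivAt_sinh x).div (Real.hasDerivAt_cosh x) (Real.cosh_pos x).ne'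
  have heq : Real.tanh = fun x => Real.sinh x / Real.cosh x :=
    funext fun x => Real.tanh_eq_sinh_div_cosh x
  rw [heq]
  refine h.congr_deriv (Eq.symm ?_)
  have hc := (Real.cosh_pos x).ne'
  have hsq := Real.cosh_sq_sub_sinh_sq x
  field_simp [Real.tanh_eq_sinh_div_cosh]

lemma my_tanh_pos {x : ℝ} (hx : 0 < x) : 0 < Real.tanh x := by
  rw [Real.tanh_eq_sinh_div_cosh]
  exact div_pos (by rwa [Real.sinh_pos_iff]) (Real.cosh_pos x)

lemma my_tanh_lt_one (x : ℝ) : Real.tanh x < 1 := by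
  rw [Real.tanh_eq_sinh_div_cosh, div_lt_one (Real.cosh_pos x)]
  nlinarith [Real.cosh_sub_sinh x, Real.exp_pos (-x)]

lemma my_tanh_lt_self {x : ℝ} (hx : 0 < x) : Real.tanh x < x := by
  have key : StrictMonoOn (fun t : ℝ => t - Real.tanh t) (Ici 0) := by
    refine strictMonoOn_of_deriv_pos (convex_Ici 0)
      ((continuous_id'.sub my_continuous_tanh).continuousOn) ?_
    intro s hs
    rw [interior_Ici] at hs
    have h : HasDerivAt (fun t : ℝ => t - Real.tanh t) (1 - (1 - Real.tanh s ^ 2)) s :=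
      (hasDerivAt_id s).sub (my_hasDerivAt_tanh s)
    rw [h.deriv]
    have := my_tanh_pos hs
    nlinarith
  have := key (self_mem_Ici) (le_of_lt hx : (0:ℝ) ≤ x) hx
  simp only [Real.tanh_zero, sub_zero] at this
  linarith

lemma my_hasDerivAt_artanh {y : ℝ} (h1 : -1 < y) (h2 : y < 1) :
    HasDerivAt _root_.artanh (1 / (1 - y ^ 2)) y := by
  have hy1 : (0:ℝ) < 1 + y := by linarith
  have hy2 : (0:ℝ) < 1 - y := by linarith
  have hsq : (1:ℝ) - y ^ 2 ≠ 0 := by nlinarith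
  have hd : HasDerivAt (fun y : ℝ => (1 + y) / (1 - y)) (2 / (1 - y) ^ 2) y := by
    have h := ((hasDerivAt_id y).const_add 1).div ((hasDerivAt_id y).const_sub 1) hy2.ne'
    refine h.congr_deriv (Eq.symm ?_)
    simp only [id]
    field_simp
    ring
  have hpos : (0:ℝ) < (1 + y) / (1 - y) := div_pos hy1 hy2
  have h := (hd.log hpos.ne').div_const 2
  refine h.congr_deriv (Eq.symm ?_)
  field_simp
  ring

theorem artanh_tanh_rpow_quarter_gt (t : ℝ) (ht : 0 < t) :
    _root_.artanh ((Real.tanh t) ^ ((1 : ℝ) / 4)) > t ^ ((1 : ℝ) / 4) := by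
  have hcont : ContinuousOn
      (fun u : ℝ => _root_.artanh ((Real.tanh u) ^ ((1:ℝ)/4)) - u ^ ((1:ℝ)/4)) (Ici 0) := by
    intro s hs
    apply ContinuousAt.continuousWithinAt
    have hT0 : 0 ≤ Real.tanh s := by
      rcases eq_or_lt_of_le (mem_Ici.mp hs) with h | h
      · simp [← h]
      · exact (my_tanh_pos h).le
    have hq0 : 0 ≤ Real.tanh s ^ ((1:ℝ)/4) := Real.rpow_nonneg hT0 _
    have hq1 : Real.tanh s ^ ((1:ℝ)/4) < 1 := by
      rcases eq_or_lt_of_le hT0 with h | h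
      · rw [← h, Real.zero_rpow (by norm_num)]; norm_num
      · exact Real.rpow_lt_one hT0 (my_tanh_lt_one s) (by norm_num)
    have c1 : ContinuousAt Real.tanh s := my_continuous_tanh.continuousAt
    have cg : ContinuousAt (fun u : ℝ => Real.tanh u ^ ((1:ℝ)/4)) s :=
      c1.rpow_const (Or.inr (by norm_num))
    have h1 : (0:ℝ) < 1 + Real.tanh s ^ ((1:ℝ)/4) := by linarith
    have h2 : (0:ℝ) < 1 - Real.tanh s ^ ((1:ℝ)/4) := by linarith
    have hc : ContinuousAt
        (fun u : ℝ => (1 + Real.tanh u ^ ((1:ℝ)/4)) / (1 - Real.tanh u ^ ((1:ℝ)/4))) s :=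
      (continuousAt_const.add cg).div (continuousAt_const.sub cg) h2.ne'
    have c4 : ContinuousAt (fun x : ℝ => x ^ ((1:ℝ)/4)) s :=
      Real.continuousAt_rpow_const _ _ (Or.inr (by norm_num))
    exact ((hc.log (div_pos h1 h2).ne').div_const 2).sub c4
  have key : StrictMonoOn
      (fun u : ℝ => _root_.artanh ((Real.tanh u) ^ ((1:ℝ)/4)) - u ^ ((1:ℝ)/4)) (Ici 0) := by
    refine strictMonoOn_of_deriv_pos (convex_Ici 0) hcont ?_
    intro s hs
    rw [interior_Ici] at hs
    have hT : 0 < Real.tanh s := my_tanh_pos hs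
    have hT1 : Real.tanh s < 1 := my_tanh_lt_one s
    have hq : 0 < Real.tanh s ^ ((1:ℝ)/4) := Real.rpow_pos_of_pos hT _
    have hq1 : Real.tanh s ^ ((1:ℝ)/4) < 1 := Real.rpow_lt_one hT.le hT1 (by norm_num)
    have h2 : HasDerivAt (fun x : ℝ => x ^ ((1:ℝ)/4))
        ((1:ℝ)/4 * Real.tanh s ^ ((1:ℝ)/4 - 1)) (Real.tanh s) :=
      Real.hasDerivAt_rpow_const (Or.inl hT.ne')
    have h3 : HasDerivAt _root_.artanh (1 / (1 - (Real.tanh s ^ ((1:ℝ)/4)) ^ 2))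
        (Real.tanh s ^ ((1:ℝ)/4)) :=
      my_hasDerivAt_artanh (by linarith) hq1
    have h4 : HasDerivAt (fun x : ℝ => x ^ ((1:ℝ)/4)) ((1:ℝ)/4 * s ^ ((1:ℝ)/4 - 1)) s :=
      Real.hasDerivAt_rpow_const (Or.inl hs.ne')
    have hDd : HasDerivAt (fun u : ℝ => _root_.artanh ((Real.tanh u) ^ ((1:ℝ)/4)) - u ^ ((1:ℝ)/4))
        (1 / (1 - (Real.tanh s ^ ((1:ℝ)/4)) ^ 2) *
          ((1:ℝ)/4 * Real.tanh s ^ ((1:ℝ)/4 - 1) * (1 - Real.tanh s ^ 2))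
          - (1:ℝ)/4 * s ^ ((1:ℝ)/4 - 1)) s := by
      have hcomp := (h3.comp s (h2.comp s (my_hasDerivAt_tanh s))).sub h4
      exact hcomp
    rw [hDd.deriv]
    -- positivity of the derivative
    set T := Real.tanh s with hTdef
    set q := T ^ ((1:ℝ)/4) with hqdef
    have hq4 : q ^ (4:ℕ) = T := by
      rw [hqdef, ← Real.rpow_natCast (T ^ ((1:ℝ)/4)) 4, ← Real.rpow_mul hT.le]
      norm_num
    have hq2 : q ^ 2 < 1 := by nlinarith
    have hfact : 1 - T ^ 2 = (1 - q ^ 2) * ((1 + q ^ 2) * (1 + q ^ 4)) := by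
      rw [← hq4]; ring
    have hne : (1:ℝ) - q ^ 2 ≠ 0 := by nlinarith
    have heq : 1 / (1 - q ^ 2) * ((1:ℝ)/4 * T ^ ((1:ℝ)/4 - 1) * (1 - T ^ 2))
        = (1:ℝ)/4 * T ^ ((1:ℝ)/4 - 1) * ((1 + q ^ 2) * (1 + q ^ 4)) := by
      rw [hfact]
      field_simp
    rw [heq]
    have hTs : T < s := my_tanh_lt_self hs
    have hexp : s ^ ((1:ℝ)/4 - 1) ≤ T ^ ((1:ℝ)/4 - 1) := by
      rw [show (1:ℝ)/4 - 1 = -(3/4) by norm_num, Real.rpow_neg hT.le,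
        Real.rpow_neg (le_of_lt hs)]
      have h34 : T ^ ((3:ℝ)/4) ≤ s ^ ((3:ℝ)/4) :=
        Real.rpow_le_rpow hT.le hTs.le (by norm_num)
      have hTp : 0 < T ^ ((3:ℝ)/4) := Real.rpow_pos_of_pos hT _
      exact inv_anti₀ hTp h34
    have hsp : 0 < s ^ ((1:ℝ)/4 - 1) := Real.rpow_pos_of_pos hs _
    have hTp : 0 < T ^ ((1:ℝ)/4 - 1) := Real.rpow_pos_of_pos hT _
    have hlt : s ^ ((1:ℝ)/4 - 1) < T ^ ((1:ℝ)/4 - 1) * ((1 + q ^ 2) * (1 + q ^ 4)) := by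
      have h5 : T ^ ((1:ℝ)/4 - 1) < T ^ ((1:ℝ)/4 - 1) * ((1 + q ^ 2) * (1 + q ^ 4)) := by
        nlinarith [mul_pos hTp (pow_pos hq 2), mul_pos hTp (pow_pos hq 4),
          mul_pos hTp (mul_pos (pow_pos hq 2) (pow_pos hq 4))]
      linarith
    linarith
  have h := key (self_mem_Ici) (le_of_lt ht : (0:ℝ) ≤ t) ht
  have hD0 : _root_.artanh ((Real.tanh 0) ^ ((1:ℝ)/4)) - (0:ℝ) ^ ((1:ℝ)/4) = 0 := by
    rw [Real.tanh_zero, Real.zero_rpow (by norm_num : ((1:ℝ)/4) ≠ 0)]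
    simp [_root_.artanh]
  simp only [] at h
  rw [hD0] at h
  linarith
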